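/- If the mutual coherence of a dictionary Ψ with unit-norm columns satisfies μ(Ψ) < 1/(2s−1), then every s-sparse vector α is the unique s-sparse solution of the equation Ψα = Ψβ; i.e., distinct s-sparse coefficient vectors produce distinct signals. -/

import Mathlib

open scoped Classical

/-- `α` is `s`-sparse: at most `s` nonzero entries. -/
def Sparse {d : ℕ} (s : ℕ) (α : Fin d → ℝ) : Prop :=
  (Finset.univ.filter fun i => α i ≠ 0).card ≤ s

/-!
If `Ψ α = Ψ β` with `α ≠ β`, then `x = α - β` is a nonzero kernel vector of the Gram matrix
`Ψᵀ Ψ`, whose diagonal entries are `1` and whose off-diagonal entries are bounded by `μ`.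
Restricted to the support of `x` the Gram matrix has eigenvalue `0`, so Gershgorin's circle
theorem gives `1 ≤ (|supp x| - 1) μ`: a nonzero kernel vector has more than `1 + 1/μ > 2s`
nonzero entries, while `α - β` has at most `2s`.
-/

open Finset Matrix

namespace Matrix

variable {l l' m n K : Type*} [Fintype n]

theorem submatrix_support_mulVec [CommRing K] (A : Matrix l n K) (f : l' → l) (x : n → K) :
    A.submatrix f ((↑) : {j // x j ≠ 0} → n) *ᵥ (fun j => x j) =
      fun i => (A *ᵥ x) (f i) := by
  ext i
  simp only [mulVec, dotProduct, submatrix_apply]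
  rw [← Finset.sum_subtype (univ.filter fun j => x j ≠ 0) (by simp) (fun j => A (f i) j * x j)]
  exact sum_subset (subset_univ _) fun j _ hj => by simp_all

theorem exists_norm_diag_le_of_mulVec_eq_zero [NormedField K] {A : Matrix n n K} {x : n → K}
    (hx : x ≠ 0) (h : A *ᵥ x = 0) :
    ∃ i : {j // x j ≠ 0}, ‖A i i‖ ≤ ∑ j ∈ univ.erase i, ‖A i j‖ := by
  obtain ⟨i, hi⟩ := Function.ne_iff.mp hx
  have hzero : Module.End.HasEigenvalue
      (toLin' (A.submatrix ((↑) : {j // x j ≠ 0} → n) (↑))) (0 : K) := by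
    refine Module.End.hasEigenvalue_of_hasEigenvector (x := fun j : {j // x j ≠ 0} => x j)
      ⟨?_, Function.ne_iff.mpr ⟨⟨i, hi⟩, hi⟩⟩
    rw [Module.End.mem_eigenspace_iff, toLin'_apply, zero_smul, submatrix_support_mulVec, h]
    rfl
  obtain ⟨k, hk⟩ := eigenvalue_mem_ball hzero
  exact ⟨k, by simpa [mem_closedBall_iff_norm'] using hk⟩

variable [Fintype m] (Ψ : Matrix m n ℝ) (hcols : ∀ j, ∑ k, Ψ k j ^ 2 = 1) {μ : ℝ}
  (hμ : ∀ i j, i ≠ j → |∑ k, Ψ k i * Ψ k j| ≤ μ) {x : n → ℝ}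
include hcols hμ

theorem one_le_card_support_sub_one_mul_of_mulVec_eq_zero (hx : x ≠ 0) (h : Ψ *ᵥ x = 0) :
    1 ≤ ((#{j | x j ≠ 0} - 1 : ℕ) : ℝ) * μ := by
  have hgram : (Ψᵀ * Ψ) *ᵥ x = 0 := by rw [← mulVec_mulVec, h, mulVec_zero]
  obtain ⟨i, hi⟩ := exists_norm_diag_le_of_mulVec_eq_zero hx hgram
  calc 1 = ‖(Ψᵀ * Ψ) i i‖ := by simp [mul_apply, ← sq, hcols]
    _ ≤ ∑ j ∈ univ.erase i, ‖(Ψᵀ * Ψ) i j‖ := hi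
    _ ≤ ∑ j ∈ univ.erase i, μ := sum_le_sum fun j hj =>
        hμ i j (Subtype.coe_injective.ne (ne_of_mem_erase hj).symm)
    _ = _ := by
      rw [sum_const, card_erase_of_mem (mem_univ _), card_univ, Fintype.card_subtype,
        nsmul_eq_mul]

theorem lt_card_support_of_mulVec_eq_zero {t : ℕ} (ht : μ < 1 / ((t : ℝ) - 1)) (hx : x ≠ 0)
    (h : Ψ *ᵥ x = 0) : t < #{j | x j ≠ 0} := by
  have hbound := one_le_card_support_sub_one_mul_of_mulVec_eq_zero Ψ hcols hμ hx h
  by_contra! hle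
  set k := #{j | x j ≠ 0} - 1
  have hk : 0 < k := Nat.pos_of_ne_zero fun hk => by norm_num [hk] at hbound
  have hkt : (k : ℝ) ≤ t - 1 := by
    rw [le_sub_iff_add_le]
    exact_mod_cast (show k + 1 ≤ t by omega)
  have hμ_pos : 0 < μ := pos_of_mul_pos_right (zero_lt_one.trans_le hbound) k.cast_nonneg
  have ht' : μ * (t - 1) < 1 := (lt_div_iff₀ ((Nat.cast_pos.mpr hk).trans_le hkt)).mp ht
  have : (k : ℝ) * μ ≤ (t - 1) * μ := by gcongr
  linarith

end Matrix

theorem Sparse.sub {d s t : ℕ} {α β : Fin d → ℝ} (hα : Sparse s α) (hβ : Sparse t β) :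
    Sparse (s + t) (α - β) :=
  calc #{i | (α - β) i ≠ 0}
      ≤ #(({i | α i ≠ 0} : Finset _) ∪ ({i | β i ≠ 0} : Finset _)) :=
        card_le_card fun i => by
          simp only [mem_union, mem_filter, mem_univ, true_and, Pi.sub_apply]
          contrapose!
          rintro ⟨hαi, hβi⟩
          rw [hαi, hβi, sub_self]
    _ ≤ _ := card_union_le _ _
    _ ≤ s + t := add_le_add hα hβ

theorem coherence_uniqueness_general (p d s : ℕ)
    (Ψ : Matrix (Fin p) (Fin d) ℝ)
    (hcols : ∀ j, ∑ k, Ψ k j ^ 2 = 1)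
    (μ : ℝ) (hμ : ∀ i j, i ≠ j → |∑ k, Ψ k i * Ψ k j| ≤ μ)
    (hμs : μ < 1 / (2 * (s : ℝ) - 1)) :
    ∀ α β : Fin d → ℝ, Sparse s α → Sparse s β →
      Ψ.mulVec α = Ψ.mulVec β → α = β := by
  intro α β hα hβ heq
  by_contra hne
  have hker : Ψ *ᵥ (α - β) = 0 := by rw [mulVec_sub, heq, sub_self]
  have hspark := Ψ.lt_card_support_of_mulVec_eq_zero hcols hμ (t := 2 * s)
    (by push_cast; exact hμs) (sub_ne_zero.mpr hne) hker
  have hsparse : Sparse (s + s) (α - β) := hα.sub hβ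
  unfold Sparse at hsparse
  omega

/-- Uniqueness via coherence: if the dictionary has unit-norm columns and mutual
coherence μ < 1/(2s−1), then distinct s-sparse coefficient vectors produce
distinct signals. -/
theorem coherence_uniqueness (p d s : ℕ) (hs : 1 ≤ s)
    (Ψ : Matrix (Fin p) (Fin d) ℝ)
    (hcols : ∀ j, ∑ k, Ψ k j ^ 2 = 1)
    (μ : ℝ) (hμ : ∀ i j, i ≠ j → |∑ k, Ψ k i * Ψ k j| ≤ μ)
    (hμs : μ < 1 / (2 * (s : ℝ) - 1)) :
    ∀ α β : Fin d → ℝ, Sparse s α → Sparse s β →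
      Ψ.mulVec α = Ψ.mulVec β → α = β :=
  coherence_uniqueness_general p d s Ψ hcols μ hμ hμs
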